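/- arXiv:2410.10982 — 3 statements merged into one kernel-verified Lean document; each statement's English description precedes it below -/
import Mathlib

section
/- Let α₀ be a real number with 0 < α₀ < π/4 and let η be a real number with cos α₀ < η < 1. Let u and v be unit vectors in the Euclidean plane ℝ² with inner product ⟪u, v⟫ ≤ cos α₀ (so that the turning angle from the line with direction u to the line with direction v is at least α₀), and let A be a point of the plane. Then there exist real numbers s > 0 and t > 0 such that, setting P = A − s·u and Q = A + t·v, one has dist(P, Q) < dist(P, A) + η · dist(A, Q); equivalently, ‖s·u + t·v‖ < s + η·t. -/
open Real RealInnerProductSpace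

/-- **Shorter path lemma.** If `0 < α₀ < π/4`, `cos α₀ < η < 1`, and `u`, `v` are unit
vectors in the Euclidean plane with `⟪u, v⟫ ≤ cos α₀`, then for any point `A` there are
`s, t > 0` such that, with `P = A - s • u` and `Q = A + t • v`,
`dist P Q < dist P A + η * dist A Q`. -/
theorem shorter_path_lemma (α₀ η : ℝ) (hα₀ : 0 < α₀) (hα₀' : α₀ < π / 4)
    (hη₁ : Real.cos α₀ < η) (hη₂ : η < 1)
    (u v : EuclideanSpace ℝ (Fin 2)) (hu : ‖u‖ = 1) (hv : ‖v‖ = 1)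
    (huv : ⟪u, v⟫ ≤ Real.cos α₀) (A : EuclideanSpace ℝ (Fin 2)) :
    ∃ s t : ℝ, 0 < s ∧ 0 < t ∧
      dist (A - s • u) (A + t • v) < dist (A - s • u) A + η * dist A (A + t • v) := by
  set c := Real.cos α₀ with hc
  have hη0 : 0 < η := lt_trans (Real.cos_pos_of_mem_Ioo
    ⟨by linarith [Real.pi_pos], by linarith [Real.pi_pos]⟩) hη₁
  have h1η : 0 < 1 - η ^ 2 := by nlinarith
  set t := (η - c) / (1 - η ^ 2) with ht
  have htpos : 0 < t := div_pos (by linarith) h1η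
  refine ⟨1, t, one_pos, htpos, ?_⟩
  have hd1 : dist (A - (1:ℝ) • u) A = 1 := by
    rw [dist_eq_norm]
    simp [norm_smul, hu]
  have hd2 : dist A (A + t • v) = t := by
    rw [dist_eq_norm]
    simp [norm_smul, hv, abs_of_pos htpos]
  have hd3 : dist (A - (1:ℝ) • u) (A + t • v) = ‖(1:ℝ) • u + t • v‖ := by
    rw [dist_eq_norm]
    rw [show A - (1:ℝ) • u - (A + t • v) = -((1:ℝ) • u + t • v) by abel, norm_neg]
  rw [hd1, hd2, hd3]
  have hsq : ‖(1:ℝ) • u + t • v‖ ^ 2 < (1 + η * t) ^ 2 := by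
    rw [norm_add_sq_real]
    rw [real_inner_smul_left, real_inner_smul_right, norm_smul, norm_smul, hu, hv]
    simp only [Real.norm_eq_abs, abs_of_pos htpos, abs_one]
    have hteq : t * (1 - η ^ 2) = η - c := by
      rw [ht, div_mul_cancel₀ _ h1η.ne']
    nlinarith [htpos, mul_pos htpos htpos]
  have hpos : (0:ℝ) < 1 + η * t := by positivity
  nlinarith [norm_nonneg ((1:ℝ) • u + t • v)]
end

section
/- Let (M, d) be a metric space, let S ⊆ M be a nonempty subset, and let ρ : M → M → ℝ be a function that is nonnegative on S × S, symmetric on S × S, satisfies the triangle inequality ρ(y₁, y₃) ≤ ρ(y₁, y₂) + ρ(y₂, y₃) for all y₁, y₂, y₃ ∈ S, and satisfies ρ(y₁, y₂) ≤ d(y₁, y₂) for all y₁, y₂ ∈ S. Define d'(x₁, x₂) = min( d(x₁, x₂), inf_{y₁, y₂ ∈ S} ( d(x₁, y₁) + ρ(y₁, y₂) + d(y₂, x₂) ) ). Then d' is a pseudometric on M: d'(x, x) = 0 for all x, d' is symmetric, d'(x₁, x₂) ≤ d(x₁, x₂) for all x₁, x₂, and d' satisfies the triangle inequality d'(x, z)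 ≤ d'(x, y) + d'(y, z). -/
/-- The shortcut metric construction: given a metric space `M`, a nonempty subset `S`,
and a function `ρ` that is nonnegative, symmetric, satisfies the triangle inequality on
`S`, and is bounded above by the ambient distance on `S × S`, the function
`d'(x₁, x₂) = min(dist x₁ x₂, inf_{y₁, y₂ ∈ S} (dist x₁ y₁ + ρ y₁ y₂ + dist y₂ x₂))`
is a pseudometric on `M` bounded above by `dist`. -/
theorem shortcut_pseudometric {M : Type*} [MetricSpace M] (S : Set M) (hS : S.Nonempty)
    (ρ : M → M → ℝ)
    (hρ_nonneg : ∀ y₁ ∈ S, ∀ y₂ ∈ S, 0 ≤ ρ y₁ y₂)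
    (hρ_symm : ∀ y₁ ∈ S, ∀ y₂ ∈ S, ρ y₁ y₂ = ρ y₂ y₁)
    (hρ_tri : ∀ y₁ ∈ S, ∀ y₂ ∈ S, ∀ y₃ ∈ S, ρ y₁ y₃ ≤ ρ y₁ y₂ + ρ y₂ y₃)
    (hρ_le : ∀ y₁ ∈ S, ∀ y₂ ∈ S, ρ y₁ y₂ ≤ dist y₁ y₂)
    (d' : M → M → ℝ)
    (hd' : ∀ x₁ x₂, d' x₁ x₂ = min (dist x₁ x₂)
      (sInf {r : ℝ | ∃ y₁ ∈ S, ∃ y₂ ∈ S, r = dist x₁ y₁ + ρ y₁ y₂ + dist y₂ x₂})) :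
    (∀ x, d' x x = 0) ∧
    (∀ x₁ x₂, d' x₁ x₂ = d' x₂ x₁) ∧
    (∀ x₁ x₂, d' x₁ x₂ ≤ dist x₁ x₂) ∧
    (∀ x y z, d' x z ≤ d' x y + d' y z) := by
  set T : M → M → Set ℝ :=
    fun x₁ x₂ => {r : ℝ | ∃ y₁ ∈ S, ∃ y₂ ∈ S, r = dist x₁ y₁ + ρ y₁ y₂ + dist y₂ x₂} with hT
  have hpos : ∀ x₁ x₂, ∀ r ∈ T x₁ x₂, (0 : ℝ) ≤ r := by
    rintro x₁ x₂ r ⟨y₁, hy₁, y₂, hy₂, rfl⟩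
    have := hρ_nonneg y₁ hy₁ y₂ hy₂
    have := dist_nonneg (x := x₁) (y := y₁)
    have := dist_nonneg (x := y₂) (y := x₂)
    linarith
  have hbdd : ∀ x₁ x₂, BddBelow (T x₁ x₂) := fun x₁ x₂ => ⟨0, hpos x₁ x₂⟩
  have hne : ∀ x₁ x₂, (T x₁ x₂).Nonempty := by
    intro x₁ x₂
    obtain ⟨y, hy⟩ := hS
    exact ⟨_, y, hy, y, hy, rfl⟩
  have hle_mem : ∀ x₁ x₂, ∀ y₁ ∈ S, ∀ y₂ ∈ S,
      d' x₁ x₂ ≤ dist x₁ y₁ + ρ y₁ y₂ + dist y₂ x₂ := by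
    intro x₁ x₂ y₁ hy₁ y₂ hy₂
    rw [hd']
    exact le_trans (min_le_right _ _) (csInf_le (hbdd x₁ x₂) ⟨y₁, hy₁, y₂, hy₂, rfl⟩)
  have hle_dist : ∀ x₁ x₂, d' x₁ x₂ ≤ dist x₁ x₂ := fun x₁ x₂ => by
    rw [hd']; exact min_le_left _ _
  have hnonneg : ∀ x₁ x₂, 0 ≤ d' x₁ x₂ := by
    intro x₁ x₂
    rw [hd']
    exact le_min dist_nonneg (le_csInf (hne x₁ x₂) (hpos x₁ x₂))
  have hsymmT : ∀ x₁ x₂, T x₁ x₂ = T x₂ x₁ := by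
    intro x₁ x₂
    ext r
    constructor
    · rintro ⟨y₁, hy₁, y₂, hy₂, rfl⟩
      exact ⟨y₂, hy₂, y₁, hy₁, by rw [hρ_symm y₂ hy₂ y₁ hy₁, dist_comm x₁ y₁, dist_comm y₂ x₂]; ring⟩
    · rintro ⟨y₁, hy₁, y₂, hy₂, rfl⟩
      exact ⟨y₂, hy₂, y₁, hy₁, by rw [hρ_symm y₂ hy₂ y₁ hy₁, dist_comm x₂ y₁, dist_comm y₂ x₁]; ring⟩
  refine ⟨?_, ?_, hle_dist, ?_⟩
  · intro x
    have h1 := hle_dist x x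
    rw [dist_self] at h1
    exact le_antisymm h1 (hnonneg x x)
  · intro x₁ x₂
    rw [hd', hd', dist_comm x₁ x₂]
    congr 1
    exact congrArg sInf (hsymmT x₁ x₂)
  · intro x y z
    refine le_of_forall_pos_le_add ?_
    intro ε hε
    -- approximate d' x y and d' y z
    have key : ∀ a b : M, ∃ w : ℝ, w ≤ d' a b + ε / 2 ∧
        (w = dist a b ∨ w ∈ T a b) := by
      intro a b
      rcases min_cases (dist a b) (sInf (T a b)) with ⟨h, _⟩ | ⟨h, _⟩
      · exact ⟨dist a b, by rw [hd'] at *; rw [h]; linarith, Or.inl rfl⟩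
      · have hlt : sInf (T a b) < sInf (T a b) + ε / 2 := by linarith
        obtain ⟨w, hw, hwlt⟩ := exists_lt_of_csInf_lt (hne a b) hlt
        refine ⟨w, ?_, Or.inr hw⟩
        rw [hd', h]
        linarith
    obtain ⟨w₁, hw₁le, hw₁⟩ := key x y
    obtain ⟨w₂, hw₂le, hw₂⟩ := key y z
    have main : d' x z ≤ w₁ + w₂ := by
      rcases hw₁ with rfl | ⟨y₁, hy₁, y₂, hy₂, rfl⟩
      · rcases hw₂ with rfl | ⟨y₃, hy₃, y₄, hy₄, rfl⟩
        · exact le_trans (hle_dist x z) (dist_triangle x y z)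
        · have := hle_mem x z y₃ hy₃ y₄ hy₄
          have := dist_triangle x y y₃
          linarith
      · rcases hw₂ with rfl | ⟨y₃, hy₃, y₄, hy₄, rfl⟩
        · have := hle_mem x z y₁ hy₁ y₂ hy₂
          have := dist_triangle y₂ y z
          linarith
        · have h1 := hle_mem x z y₁ hy₁ y₄ hy₄
          have h2 := hρ_tri y₁ hy₁ y₂ hy₂ y₄ hy₄
          have h3 := hρ_tri y₂ hy₂ y₃ hy₃ y₄ hy₄
          have h4 := hρ_le y₂ hy₂ y₃ hy₃
          have h5 := dist_triangle y₂ y y₃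
          linarith
    linarith
end

section
/- Let n ≥ 3 be an integer. For ρ > 0 let V(ρ) = ∫_{A_ρ} sinh(r₁)^{n−1} · sinh(r₂)^{n−1} d(r₁, r₂), where A_ρ = { (r₁, r₂) ∈ ℝ² : r₁ ≥ 0, r₂ ≥ 0, r₁² + r₂² ≤ ρ² }. Then log(V(ρ))/ρ tends to √2 · (n − 1) as ρ → ∞. -/
open Real Filter Topology MeasureTheory

private lemma sinh_le_exp' (x : ℝ) : Real.sinh x ≤ Real.exp x := by
  rw [Real.sinh_eq]
  have h1 := Real.exp_pos x
  have h2 := Real.exp_pos (-x)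
  linarith

private lemma exp_div_four_le_sinh' {x : ℝ} (hx : 1 ≤ x) :
    Real.exp x / 4 ≤ Real.sinh x := by
  rw [Real.sinh_eq]
  have h1 : Real.exp (-x) ≤ 1 := Real.exp_le_one_iff.2 (by linarith)
  have h2 : (2:ℝ) ≤ Real.exp x := by
    have h3 := Real.add_one_le_exp (1:ℝ)
    have h4 := Real.exp_le_exp.2 hx
    linarith
  linarith

/-- Volume growth of geodesic balls in `ℍⁿ × ℍⁿ`: for `n ≥ 3`, setting
`V(ρ) = ∫_{r₁, r₂ ≥ 0, r₁² + r₂² ≤ ρ²} sinh(r₁)^(n-1) · sinh(r₂)^(n-1)`, one has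
`log (V ρ) / ρ → √2 · (n - 1)` as `ρ → ∞`. -/
theorem volume_growth_product (n : ℕ) (hn : 3 ≤ n) :
    Tendsto
      (fun ρ : ℝ =>
        Real.log (∫ p in {p : ℝ × ℝ | 0 ≤ p.1 ∧ 0 ≤ p.2 ∧ p.1 ^ 2 + p.2 ^ 2 ≤ ρ ^ 2},
          Real.sinh p.1 ^ (n - 1) * Real.sinh p.2 ^ (n - 1)) / ρ)
      atTop (𝓝 (Real.sqrt 2 * (n - 1))) := by
  set k := n - 1 with hk
  have hcast : ((n:ℝ) - 1) = (k:ℝ) := by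
    have h1 : (1:ℕ) ≤ n := by omega
    rw [hk, Nat.cast_sub h1, Nat.cast_one]
  rw [hcast]
  set L : ℝ := Real.sqrt 2 * (k:ℝ) with hL
  set C : ℝ := 2 * (k:ℝ) * (1 + Real.log 4) with hC
  set f : ℝ × ℝ → ℝ := fun p => Real.sinh p.1 ^ k * Real.sinh p.2 ^ k with hf
  set A : ℝ → Set (ℝ × ℝ) :=
    fun ρ => {p : ℝ × ℝ | 0 ≤ p.1 ∧ 0 ≤ p.2 ∧ p.1 ^ 2 + p.2 ^ 2 ≤ ρ ^ 2} with hA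
  set V : ℝ → ℝ := fun ρ => ∫ p in A ρ, f p with hV
  have hfc : Continuous f := by
    exact ((Real.continuous_sinh.comp continuous_fst).pow k).mul
      ((Real.continuous_sinh.comp continuous_snd).pow k)
  have hs2pos : (0:ℝ) < Real.sqrt 2 := Real.sqrt_pos.2 (by norm_num)
  have h22 : Real.sqrt 2 * Real.sqrt 2 = 2 := Real.mul_self_sqrt (by norm_num)
  have hs2le : Real.sqrt 2 ≤ 3/2 := by
    rw [show (3/2:ℝ) = Real.sqrt ((3/2)^2) from (Real.sqrt_sq (by norm_num)).symm]
    exact Real.sqrt_le_sqrt (by norm_num)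
  have key : ∀ ρ : ℝ, 3 ≤ ρ →
      L - C / ρ ≤ Real.log (V ρ) / ρ ∧
      Real.log (V ρ) / ρ ≤ L + 2 * Real.log ρ / ρ := by
    intro ρ hρ3
    have hρ0 : (0:ℝ) < ρ := by linarith
    set c : ℝ := ρ / Real.sqrt 2 with hc
    have hc1 : 1 ≤ c - 1 := by
      have h2c : (2:ℝ) ≤ c := by
        rw [hc, le_div_iff₀ hs2pos]
        nlinarith
      linarith
    have hAm : MeasurableSet (A ρ) := by
      have : IsClosed (A ρ) := by
        have h1 : IsClosed {p : ℝ × ℝ | 0 ≤ p.1} :=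
          isClosed_le continuous_const continuous_fst
        have h2 : IsClosed {p : ℝ × ℝ | 0 ≤ p.2} :=
          isClosed_le continuous_const continuous_snd
        have h3 : IsClosed {p : ℝ × ℝ | p.1 ^ 2 + p.2 ^ 2 ≤ ρ ^ 2} :=
          isClosed_le ((continuous_fst.pow 2).add (continuous_snd.pow 2)) continuous_const
        have : A ρ = {p : ℝ × ℝ | 0 ≤ p.1} ∩ ({p : ℝ × ℝ | 0 ≤ p.2} ∩
            {p : ℝ × ℝ | p.1 ^ 2 + p.2 ^ 2 ≤ ρ ^ 2}) := by
          ext p; simp [hA, Set.mem_setOf_eq, and_assoc]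
        rw [this]
        exact h1.inter (h2.inter h3)
      exact this.measurableSet
    have hsub : A ρ ⊆ Set.Icc (0:ℝ×ℝ) (ρ, ρ) := by
      intro p hp
      obtain ⟨h1, h2, h3⟩ := hp
      have hp1 : p.1 ≤ ρ := by nlinarith
      have hp2 : p.2 ≤ ρ := by nlinarith
      exact ⟨⟨h1, h2⟩, ⟨hp1, hp2⟩⟩
    have hfA : IntegrableOn f (A ρ) := by
      exact ((hfc.continuousOn).integrableOn_compact isCompact_Icc).mono_set hsub
    have hμAlt : volume (A ρ) < ⊤ :=
      lt_of_le_of_lt (measure_mono hsub) isCompact_Icc.measure_lt_top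
    have hμA : (volume (A ρ)).toReal ≤ ρ ^ 2 := by
      have hIcc : Set.Icc ((0:ℝ),(0:ℝ)) (ρ, ρ) = Set.Icc (0:ℝ) ρ ×ˢ Set.Icc (0:ℝ) ρ :=
        (Set.Icc_prod_Icc (0:ℝ) ρ (0:ℝ) ρ).symm
      have h1 : volume (A ρ) ≤ volume (Set.Icc (0:ℝ) ρ ×ˢ Set.Icc (0:ℝ) ρ) := by
        refine measure_mono ?_
        rw [← hIcc]; exact hsub
      have h2 : volume (Set.Icc (0:ℝ) ρ ×ˢ Set.Icc (0:ℝ) ρ)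
          = ENNReal.ofReal ρ * ENNReal.ofReal ρ := by
        rw [Measure.volume_eq_prod, Measure.prod_prod, Real.volume_Icc]
        simp
      calc (volume (A ρ)).toReal ≤ (ENNReal.ofReal ρ * ENNReal.ofReal ρ).toReal := by
            refine ENNReal.toReal_mono ?_ (h2 ▸ h1)
            exact ENNReal.mul_ne_top ENNReal.ofReal_ne_top ENNReal.ofReal_ne_top
        _ = ρ * ρ := by
            rw [ENNReal.toReal_mul, ENNReal.toReal_ofReal hρ0.le]
        _ = ρ ^ 2 := by ring
    -- lower bound
    set S : Set (ℝ × ℝ) := Set.Icc (c-1) c ×ˢ Set.Icc (c-1) c with hS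
    have hSsub : S ⊆ A ρ := by
      intro p hp
      obtain ⟨⟨h11, h12⟩, h21, h22'⟩ := hp
      have hc2 : c ^ 2 + c ^ 2 = ρ ^ 2 := by
        rw [hc, div_pow]
        rw [show Real.sqrt 2 ^ 2 = 2 by rw [sq]; exact h22]
        ring
      have hp1 : 0 ≤ p.1 := by linarith
      have hp2 : 0 ≤ p.2 := by linarith
      refine ⟨hp1, hp2, ?_⟩
      have q1 : p.1 ^ 2 ≤ c ^ 2 := pow_le_pow_left₀ hp1 h12 2
      have q2 : p.2 ^ 2 ≤ c ^ 2 := pow_le_pow_left₀ hp2 h22' 2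
      linarith
    have hSm : MeasurableSet S := measurableSet_Icc.prod measurableSet_Icc
    have hbpos : 0 < Real.sinh (c-1) := by
      have := exp_div_four_le_sinh' hc1
      have := Real.exp_pos (c-1)
      linarith
    have hvolS : (volume S).toReal = 1 := by
      rw [hS, Measure.volume_eq_prod, Measure.prod_prod, Real.volume_Icc]
      norm_num
    have hfS : IntegrableOn f S := hfA.mono_set hSsub
    have hVS : Real.sinh (c-1) ^ k * Real.sinh (c-1) ^ k ≤ ∫ p in S, f p := by
      have hconst : ∫ (_ : ℝ × ℝ) in S, (Real.sinh (c-1) ^ k * Real.sinh (c-1) ^ k)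
          = Real.sinh (c-1) ^ k * Real.sinh (c-1) ^ k := by
        rw [setIntegral_const, measureReal_def, hvolS, one_smul]
      rw [← hconst]
      refine setIntegral_mono_on (integrableOn_const ?_) hfS hSm ?_
      · exact (lt_of_le_of_lt (measure_mono hSsub) hμAlt).ne
      · intro p hp
        obtain ⟨⟨h11, h12⟩, h21, h22'⟩ := hp
        have q1 : Real.sinh (c-1) ^ k ≤ Real.sinh p.1 ^ k :=
          pow_le_pow_left₀ hbpos.le (Real.sinh_le_sinh.2 h11) k
        have q2 : Real.sinh (c-1) ^ k ≤ Real.sinh p.2 ^ k :=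
          pow_le_pow_left₀ hbpos.le (Real.sinh_le_sinh.2 h21) k
        have q3 : (0:ℝ) ≤ Real.sinh (c-1) ^ k := pow_nonneg hbpos.le k
        have q4 : (0:ℝ) ≤ Real.sinh p.1 ^ k :=
          pow_nonneg (le_trans hbpos.le (Real.sinh_le_sinh.2 h11)) k
        exact mul_le_mul q1 q2 q3 q4
    have hVlow : (Real.exp (c-1) / 4) ^ k * (Real.exp (c-1) / 4) ^ k ≤ V ρ := by
      have h0f : 0 ≤ᵐ[volume.restrict (A ρ)] f := by
        refine (ae_restrict_iff' hAm).2 (ae_of_all _ fun p hp => ?_)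
        exact mul_nonneg (pow_nonneg (Real.sinh_nonneg_iff.2 hp.1) k)
          (pow_nonneg (Real.sinh_nonneg_iff.2 hp.2.1) k)
      have hmono : ∫ p in S, f p ≤ V ρ :=
        setIntegral_mono_set hfA h0f (HasSubset.Subset.eventuallyLE hSsub)
      have hexp : (Real.exp (c-1) / 4) ^ k ≤ Real.sinh (c-1) ^ k :=
        pow_le_pow_left₀ (by positivity) (exp_div_four_le_sinh' hc1) k
      have := mul_le_mul hexp hexp (by positivity) (pow_nonneg hbpos.le k)
      linarith [hVS, hmono]
    have hVpos : 0 < V ρ := lt_of_lt_of_le (by positivity) hVlow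
    -- upper bound
    have hVup : V ρ ≤ ρ ^ 2 * Real.exp (Real.sqrt 2 * ρ) ^ k := by
      have hpt : ∀ p ∈ A ρ, f p ≤ Real.exp (Real.sqrt 2 * ρ) ^ k := by
        intro p hp
        obtain ⟨h1, h2, h3⟩ := hp
        have hsum : p.1 + p.2 ≤ Real.sqrt 2 * ρ := by
          have hsq : (p.1 + p.2) ^ 2 ≤ (Real.sqrt 2 * ρ) ^ 2 := by
            rw [mul_pow, show Real.sqrt 2 ^ 2 = 2 by rw [sq]; exact h22]
            nlinarith [sq_nonneg (p.1 - p.2)]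
          calc p.1 + p.2 = Real.sqrt ((p.1 + p.2) ^ 2) :=
                (Real.sqrt_sq (add_nonneg h1 h2)).symm
            _ ≤ Real.sqrt ((Real.sqrt 2 * ρ) ^ 2) := Real.sqrt_le_sqrt hsq
            _ = Real.sqrt 2 * ρ := Real.sqrt_sq (by positivity)
        calc f p ≤ Real.exp p.1 ^ k * Real.exp p.2 ^ k := by
              refine mul_le_mul (pow_le_pow_left₀ (Real.sinh_nonneg_iff.2 h1) (sinh_le_exp' _) k)
                (pow_le_pow_left₀ (Real.sinh_nonneg_iff.2 h2) (sinh_le_exp' _) k)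
                (pow_nonneg (Real.sinh_nonneg_iff.2 h2) k) (pow_nonneg (Real.exp_pos _).le k)
          _ = Real.exp (p.1 + p.2) ^ k := by rw [← mul_pow, ← Real.exp_add]
          _ ≤ Real.exp (Real.sqrt 2 * ρ) ^ k :=
              pow_le_pow_left₀ (Real.exp_pos _).le (Real.exp_le_exp.2 hsum) k
      have h1 : V ρ ≤ ∫ (_ : ℝ × ℝ) in A ρ, Real.exp (Real.sqrt 2 * ρ) ^ k :=
        setIntegral_mono_on hfA (integrableOn_const hμAlt.ne) hAm hpt
      have h2 : ∫ (_ : ℝ × ℝ) in A ρ, Real.exp (Real.sqrt 2 * ρ) ^ k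
          = (volume (A ρ)).toReal * Real.exp (Real.sqrt 2 * ρ) ^ k := by
        rw [setIntegral_const, smul_eq_mul, measureReal_def]
      calc V ρ ≤ (volume (A ρ)).toReal * Real.exp (Real.sqrt 2 * ρ) ^ k := by
            rw [← h2]; exact h1
        _ ≤ ρ ^ 2 * Real.exp (Real.sqrt 2 * ρ) ^ k :=
            mul_le_mul_of_nonneg_right hμA (pow_nonneg (Real.exp_pos _).le k)
    constructor
    · -- lower log bound
      have hlogV : L * ρ - C ≤ Real.log (V ρ) := by
        have h1 : Real.log ((Real.exp (c-1) / 4) ^ k * (Real.exp (c-1) / 4) ^ k)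
            ≤ Real.log (V ρ) :=
          Real.log_le_log (by positivity) hVlow
        have h2 : Real.log ((Real.exp (c-1) / 4) ^ k * (Real.exp (c-1) / 4) ^ k)
            = 2 * (k:ℝ) * ((c - 1) - Real.log 4) := by
          rw [Real.log_mul (by positivity) (by positivity), Real.log_pow,
            Real.log_div (Real.exp_ne_zero _) (by norm_num), Real.log_exp]
          ring
        have hcs : c * Real.sqrt 2 = ρ := by rw [hc]; field_simp
        have h2c : 2 * c = Real.sqrt 2 * ρ := by
          linear_combination Real.sqrt 2 * hcs - c * h22
        have h3 : 2 * (k:ℝ) * ((c - 1) - Real.log 4) = L * ρ - C := by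
          rw [hL, hC]
          linear_combination (k:ℝ) * h2c
        rw [h2, h3] at h1
        exact h1
      have := (div_le_div_iff_of_pos_right hρ0).2 hlogV
      calc L - C / ρ = (L * ρ - C) / ρ := by field_simp
        _ ≤ Real.log (V ρ) / ρ := (div_le_div_iff_of_pos_right hρ0).2 hlogV
    · -- upper log bound
      have hlogV : Real.log (V ρ) ≤ L * ρ + 2 * Real.log ρ := by
        have h1 : Real.log (V ρ) ≤ Real.log (ρ ^ 2 * Real.exp (Real.sqrt 2 * ρ) ^ k) :=
          Real.log_le_log hVpos hVup
        have h2 : Real.log (ρ ^ 2 * Real.exp (Real.sqrt 2 * ρ) ^ k)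
            = 2 * Real.log ρ + (k:ℝ) * (Real.sqrt 2 * ρ) := by
          rw [Real.log_mul (by positivity) (by positivity), Real.log_pow, Real.log_pow,
            Real.log_exp]
          push_cast
          ring
        rw [h2] at h1
        rw [hL]
        have h4 : (k:ℝ) * (Real.sqrt 2 * ρ) = Real.sqrt 2 * (k:ℝ) * ρ := by ring
        linarith
      calc Real.log (V ρ) / ρ ≤ (L * ρ + 2 * Real.log ρ) / ρ :=
            (div_le_div_iff_of_pos_right hρ0).2 hlogV
        _ = L + 2 * Real.log ρ / ρ := by field_simp
  -- squeeze
  have hlo : Tendsto (fun ρ : ℝ => L - C / ρ) atTop (𝓝 L) := by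
    have h1 : Tendsto (fun ρ : ℝ => C / ρ) atTop (𝓝 0) :=
      tendsto_const_nhds.div_atTop tendsto_id
    simpa using tendsto_const_nhds.sub h1
  have hhi : Tendsto (fun ρ : ℝ => L + 2 * Real.log ρ / ρ) atTop (𝓝 L) := by
    have h := Real.isLittleO_log_id_atTop.tendsto_div_nhds_zero
    have h1 : Tendsto (fun ρ : ℝ => 2 * Real.log ρ / ρ) atTop (𝓝 0) := by
      have := h.const_mul (2:ℝ)
      simpa [mul_div_assoc] using this
    simpa using tendsto_const_nhds.add h1
  refine tendsto_of_tendsto_of_tendsto_of_le_of_le' hlo hhi ?_ ?_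
  · exact eventually_atTop.2 ⟨3, fun ρ hρ => (key ρ hρ).1⟩
  · exact eventually_atTop.2 ⟨3, fun ρ hρ => (key ρ hρ).2⟩
end
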